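/- Let ν be a density matrix on C²⊗C^d whose reduced state ν_A = Tr_B(ν) has spectrum {(1−η)/2, (1+η)/2} for some η ∈ [0,1). Define μ = (ν_A^{−1/2} ⊗ I) ν (ν_A^{−1/2} ⊗ I). Then the operator inequality μ ≥ s(η)·ν − t(η)·(I/2 ⊗ ν_B) holds, where s(η) = 2/√(1−η²), t(η) = 4/√(1−η²) − 4/(1+η), and ν_B = Tr_A(ν). -/

import Mathlib

open Matrix Kronecker ComplexOrder

noncomputable section

/-- Partial trace over the second tensor factor. -/
def ptraceB {α β : Type*} [Fintype β] (ρ : Matrix (α × β) (α × β) ℂ) : Matrix α α ℂ :=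
  Matrix.of fun a a' => ∑ b, ρ (a, b) (a', b)

/-- Partial trace over the first tensor factor. -/
def ptraceA {α β : Type*} [Fintype α] (ρ : Matrix (α × β) (α × β) ℂ) : Matrix β β ℂ :=
  Matrix.of fun b b' => ∑ a, ρ (a, b) (a, b')

/-- The positive semidefinite square root of a positive semidefinite matrix
(as defined in Mathlib before its removal). -/
def Matrix.PosSemidef.sqrt {n 𝕜 : Type*} [Fintype n] [DecidableEq n] [RCLike 𝕜]
    {A : Matrix n n 𝕜} (hA : A.PosSemidef) : Matrix n n 𝕜 :=
  hA.1.eigenvectorUnitary.1 * diagonal ((↑) ∘ (√·) ∘ hA.1.eigenvalues) *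
    (star hA.1.eigenvectorUnitary : Matrix n n 𝕜)

def sFun (η : ℝ) : ℝ := 2 / Real.sqrt (1 - η ^ 2)

def tFun (η : ℝ) : ℝ := 4 / Real.sqrt (1 - η ^ 2) - 4 / (1 + η)

/-!
Write `ν_A = U diag(a, b) U*` with `a = (1 - η)/2 ≤ b = (1 + η)/2`, and put `u = a^{-1/2} ≥ v = b^{-1/2}`,
so that `s(η) = uv` and `t(η)/2 = v(u - v)`. Conjugating by the local unitary `U ⊗ I`, which does
not change `ν_B`, reduces the claim to `D ν D - uv ν + v(u - v) (I ⊗ ν_B) ≥ 0` for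
`D = u I - (u - v) Q`, where `Q = E_qq ⊗ I` and `e_q` is the eigenvector for `b`. Expanding,
this matrix is `u(u - v) (I - Q) ν (I - Q) + v(u - v) (I ⊗ ν_B - Q ν Q)`, and
`I ⊗ ν_B - Q ν Q = (I - E_qq) ⊗ ν_B + E_qq ⊗ (ν_B - ν_qq)` is positive because `ν_B - ν_qq`
is the sum of the other diagonal blocks of `ν`.
-/

section PartialTrace

variable {α β : Type*}

theorem ptraceA_eq_sum_submatrix [Fintype α] (ν : Matrix (α × β) (α × β) ℂ) :
    ptraceA ν = ∑ a, ν.submatrix (Prod.mk a) (Prod.mk a) := by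
  ext b b'
  simp [ptraceA, Matrix.sum_apply]

theorem posSemidef_ptraceA [Fintype α] [Fintype β] {ν : Matrix (α × β) (α × β) ℂ}
    (hν : ν.PosSemidef) : (ptraceA ν).PosSemidef := by
  rw [ptraceA_eq_sum_submatrix]
  exact posSemidef_sum _ fun a _ => hν.submatrix _

theorem Matrix.PosSemidef.ptraceA_sub_submatrix [Fintype α] [DecidableEq α] [Fintype β]
    {ν : Matrix (α × β) (α × β) ℂ} (hν : ν.PosSemidef) (q : α) :
    (ptraceA ν - ν.submatrix (Prod.mk q) (Prod.mk q)).PosSemidef := by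
  rw [ptraceA_eq_sum_submatrix, ← Finset.add_sum_erase _ _ (Finset.mem_univ q),
    add_sub_cancel_left]
  exact posSemidef_sum _ fun a _ => hν.submatrix _

theorem ptraceA_kronecker_one_mul_mul_kronecker_one [Fintype α] [Fintype β] [DecidableEq β]
    (A B : Matrix α α ℂ) (ν : Matrix (α × β) (α × β) ℂ) :
    ptraceA ((A ⊗ₖ (1 : Matrix β β ℂ)) * ν * (B ⊗ₖ 1)) = ptraceA (((B * A) ⊗ₖ 1) * ν) := by
  ext b b'
  simp only [ptraceA, of_apply, mul_apply, Fintype.sum_prod_type, kroneckerMap_apply, one_apply,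
    mul_ite, ite_mul, mul_one, mul_zero, zero_mul, Finset.sum_ite_eq, Finset.sum_ite_eq',
    Finset.mem_univ, if_true, Finset.sum_mul]
  rw [Finset.sum_comm]
  refine Finset.sum_congr rfl fun _ _ => ?_
  rw [Finset.sum_comm]
  exact Finset.sum_congr rfl fun _ _ => Finset.sum_congr rfl fun _ _ => by ring

theorem single_kronecker_one_mul_mul_single_kronecker_one [Fintype α] [DecidableEq α]
    [Fintype β] [DecidableEq β] (ν : Matrix (α × β) (α × β) ℂ) (q : α) :
    (single q q 1 ⊗ₖ 1) * ν * (single q q 1 ⊗ₖ 1) =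
      single q q 1 ⊗ₖ ν.submatrix (Prod.mk q) (Prod.mk q) := by
  ext ⟨a, b⟩ ⟨a', b'⟩
  simp only [Matrix.mul_apply, kroneckerMap_apply, single_apply, ite_and, one_apply, mul_ite,
    mul_one, mul_zero, ite_mul, one_mul, zero_mul, Fintype.sum_prod_type, Finset.sum_ite_eq,
    Finset.mem_univ, ↓reduceIte, Finset.sum_ite_irrel, Finset.sum_const_zero, Finset.sum_ite_eq',
    submatrix_apply]
  split_ifs <;> simp_all

end PartialTrace

section SingleProjection

variable {α R : Type*} [DecidableEq α] [CommRing R] [PartialOrder R] [StarRing R]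
  [StarOrderedRing R]

theorem posSemidef_single_self (q : α) : (single q q (1 : R)).PosSemidef := by
  rw [← diagonal_single]
  exact PosSemidef.diagonal (Pi.single_nonneg.2 zero_le_one)

theorem posSemidef_one_sub_single_self (q : α) : (1 - single q q (1 : R)).PosSemidef := by
  rw [← diagonal_one, ← diagonal_single, diagonal_sub]
  refine PosSemidef.diagonal fun i => ?_
  by_cases h : i = q <;> simp [h]

end SingleProjection

section RescalingGap

variable {α β : Type*} [Fintype α] [DecidableEq α] [Fintype β] [DecidableEq β]

def rescalingGap (Y : Matrix α α ℂ) (s t : ℂ) (ν : Matrix (α × β) (α × β) ℂ) :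
    Matrix (α × β) (α × β) ℂ :=
  (Y ⊗ₖ 1) * ν * (Y ⊗ₖ 1) - (s • ν - t • ((1 : Matrix α α ℂ) ⊗ₖ ptraceA ν))

theorem Matrix.PosSemidef.one_kronecker_ptraceA_sub {ν : Matrix (α × β) (α × β) ℂ}
    (hν : ν.PosSemidef) (q : α) :
    ((1 : Matrix α α ℂ) ⊗ₖ ptraceA ν
      - (single q q 1 ⊗ₖ 1) * ν * (single q q 1 ⊗ₖ 1)).PosSemidef := by
  have hsplit : (1 : Matrix α α ℂ) ⊗ₖ ptraceA ν - (single q q 1 ⊗ₖ 1) * ν * (single q q 1 ⊗ₖ 1)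
      = (1 - single q q 1) ⊗ₖ ptraceA ν
        + single q q 1 ⊗ₖ (ptraceA ν - ν.submatrix (Prod.mk q) (Prod.mk q)) := by
    rw [single_kronecker_one_mul_mul_single_kronecker_one]
    ext i j
    simp only [Matrix.sub_apply, Matrix.add_apply, kroneckerMap_apply]
    ring
  rw [hsplit]
  exact ((posSemidef_one_sub_single_self q).kronecker (posSemidef_ptraceA hν)).add
    ((posSemidef_single_self q).kronecker (hν.ptraceA_sub_submatrix q))

theorem Matrix.PosSemidef.rescalingGap_smul_one_sub_smul_single {ν : Matrix (α × β) (α × β) ℂ}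
    (hν : ν.PosSemidef) (q : α) {u v : ℝ} (hv : 0 ≤ v) (hvu : v ≤ u) :
    (rescalingGap ((u : ℂ) • 1 - ((u : ℂ) - v) • single q q 1) (u * v) (v * (u - v))
      ν).PosSemidef := by
  set Q : Matrix (α × β) (α × β) ℂ := single q q 1 ⊗ₖ 1
  have hQ : Qᴴ = Q := by
    rw [conjTranspose_kronecker, conjTranspose_single, conjTranspose_one, star_one]
  have hY : ((u : ℂ) • 1 - ((u : ℂ) - v) • single q q 1) ⊗ₖ (1 : Matrix β β ℂ)
      = (u : ℂ) • 1 - ((u : ℂ) - v) • Q := by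
    ext i j
    simp only [Q, kroneckerMap_apply, Matrix.sub_apply, Matrix.smul_apply, one_apply,
      Prod.ext_iff, smul_eq_mul]
    split_ifs <;> simp_all
  have hexpand : rescalingGap ((u : ℂ) • 1 - ((u : ℂ) - v) • single q q 1) (u * v) (v * (u - v)) ν
      = ((u : ℂ) * (u - v)) • ((1 - Q)ᴴ * ν * (1 - Q))
        + ((v : ℂ) * (u - v)) • ((1 : Matrix α α ℂ) ⊗ₖ ptraceA ν - Q * ν * Q) := by
    rw [rescalingGap, conjTranspose_sub, conjTranspose_one, hQ, hY]
    clear_value Q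
    simp only [mul_sub, sub_mul, smul_mul_assoc, mul_smul_comm, mul_one, one_mul,
      Matrix.mul_assoc, smul_sub]
    module
  rw [hexpand]
  refine ((hν.conjTranspose_mul_mul_same _).smul ?_).add
    ((hν.one_kronecker_ptraceA_sub q).smul ?_)
  · exact_mod_cast mul_nonneg (hv.trans hvu) (sub_nonneg.mpr hvu)
  · exact_mod_cast mul_nonneg hv (sub_nonneg.mpr hvu)

theorem posSemidef_rescalingGap_conj_of_mem_unitaryGroup {U : Matrix α α ℂ}
    (hU : U ∈ unitaryGroup α ℂ) {Y : Matrix α α ℂ} {s t : ℂ}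
    (hY : ∀ ν : Matrix (α × β) (α × β) ℂ, ν.PosSemidef → (rescalingGap Y s t ν).PosSemidef)
    {ν : Matrix (α × β) (α × β) ℂ} (hν : ν.PosSemidef) :
    (rescalingGap (U * Y * star U) s t ν).PosSemidef := by
  set W : Matrix (α × β) (α × β) ℂ := U ⊗ₖ 1
  have hWs : star W = star U ⊗ₖ 1 := by
    rw [star_eq_conjTranspose, conjTranspose_kronecker, conjTranspose_one]; rfl
  have hWW : star W * W = 1 := by
    rw [hWs, ← mul_kronecker_mul, Unitary.star_mul_self_of_mem hU, one_mul, one_kronecker_one]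
  have hWW' : W * star W = 1 := by
    rw [hWs, ← mul_kronecker_mul, Unitary.mul_star_self_of_mem hU, one_mul, one_kronecker_one]
  set ν' := star W * ν * W
  have hν_eq : ν = W * ν' * star W := by
    simp only [ν', ← Matrix.mul_assoc, hWW', one_mul]
    rw [Matrix.mul_assoc, hWW', mul_one]
  have hB : ptraceA ν = ptraceA ν' := by
    rw [hν_eq, hWs]
    refine (ptraceA_kronecker_one_mul_mul_kronecker_one U (star U) ν').trans ?_
    rw [Unitary.star_mul_self_of_mem hU, one_kronecker_one, one_mul]
  have hX : (U * Y * star U) ⊗ₖ (1 : Matrix β β ℂ) = W * (Y ⊗ₖ 1) * star W := by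
    rw [hWs, ← mul_kronecker_mul, ← mul_kronecker_mul, one_mul, one_mul]
  have h1 : (1 : Matrix α α ℂ) ⊗ₖ ptraceA ν' = W * (1 ⊗ₖ ptraceA ν') * star W := by
    rw [hWs, ← mul_kronecker_mul, ← mul_kronecker_mul, mul_one, Unitary.mul_star_self_of_mem hU,
      one_mul, mul_one]
  have hcancel : ∀ X : Matrix (α × β) (α × β) ℂ, star W * (W * X) = X := fun X => by
    rw [← Matrix.mul_assoc, hWW, one_mul]
  rw [rescalingGap, hB, hX, h1, hν_eq]
  convert (hY ν' (hν.conjTranspose_mul_mul_same W)).mul_mul_conjTranspose_same W using 1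
  rw [rescalingGap, ← star_eq_conjTranspose]
  simp only [mul_sub, sub_mul, mul_smul_comm, smul_mul_assoc, Matrix.mul_assoc, hcancel]

end RescalingGap

theorem Matrix.PosSemidef.inv_sqrt_eq {n 𝕜 : Type*} [Fintype n] [DecidableEq n] [RCLike 𝕜]
    {A : Matrix n n 𝕜} (hA : A.PosSemidef) (hpos : ∀ i, 0 < hA.1.eigenvalues i) :
    hA.sqrt⁻¹ = (hA.1.eigenvectorUnitary : Matrix n n 𝕜)
      * diagonal (fun i => (((√(hA.1.eigenvalues i))⁻¹ : ℝ) : 𝕜))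
      * star (hA.1.eigenvectorUnitary : Matrix n n 𝕜) := by
  set U : Matrix n n 𝕜 := hA.1.eigenvectorUnitary.1
  have hdiag : diagonal (((↑) : ℝ → 𝕜) ∘ (√·) ∘ hA.1.eigenvalues)
      * diagonal (fun i => (((√(hA.1.eigenvalues i))⁻¹ : ℝ) : 𝕜)) = 1 := by
    rw [diagonal_mul_diagonal, ← diagonal_one]
    congr 1
    funext i
    have : √(hA.1.eigenvalues i) ≠ 0 := (Real.sqrt_pos.mpr (hpos i)).ne'
    simp [this]
  apply inv_eq_right_inv
  calc hA.sqrt * (U * diagonal (fun i => (((√(hA.1.eigenvalues i))⁻¹ : ℝ) : 𝕜)) * star U)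
      = U * (diagonal (((↑) : ℝ → 𝕜) ∘ (√·) ∘ hA.1.eigenvalues) * (star U * U)
          * diagonal (fun i => (((√(hA.1.eigenvalues i))⁻¹ : ℝ) : 𝕜))) * star U := by
        simp only [PosSemidef.sqrt, U, Matrix.mul_assoc]
    _ = 1 := by
        rw [Unitary.star_mul_self_of_mem hA.1.eigenvectorUnitary.2, mul_one, hdiag, mul_one,
          Unitary.mul_star_self_of_mem hA.1.eigenvectorUnitary.2]

theorem diagonal_eq_smul_one_sub_smul_single {n R : Type*} [DecidableEq n] [CommRing R]
    {x : n → R} {c : R} (q : n) (hx : ∀ i ≠ q, x i = c) :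
    diagonal x = c • 1 - (c - x q) • single q q 1 := by
  rw [← diagonal_one, ← diagonal_single, ← diagonal_smul, ← diagonal_smul, diagonal_sub]
  congr 1
  funext i
  by_cases hi : i = q
  · subst hi; simp
  · simp [hx i hi, hi]

theorem Matrix.IsHermitian.range_eigenvalues_eq_pair {n : Type*} [Fintype n] [DecidableEq n]
    {A : Matrix n n ℂ} (hA : A.IsHermitian) {a b : ℝ} (h : spectrum ℂ A = {(a : ℂ), (b : ℂ)}) :
    Set.range hA.eigenvalues = {a, b} := by
  rw [hA.spectrum_eq_image_range, ← Set.image_pair] at h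
  exact Set.image_injective.mpr Complex.ofReal_injective h

theorem Fin.exists_eq_and_forall_ne_eq_of_range_eq_pair {f : Fin 2 → ℝ} {a b : ℝ}
    (hf : Set.range f = {a, b}) : ∃ q, f q = b ∧ ∀ i ≠ q, f i = a := by
  obtain ⟨q, hq⟩ : b ∈ Set.range f := by simp [hf]
  obtain ⟨p, hp⟩ : a ∈ Set.range f := by simp [hf]
  refine ⟨q, hq, fun i hiq => ?_⟩
  by_cases hip : i = p
  · rw [hip, hp]
  · have hpq : p = q := by omega
    rcases (hf ▸ Set.mem_range_self i : f i ∈ ({a, b} : Set ℝ)) with hi | hi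
    · exact hi
    · rw [hi, ← hq, ← hpq, hp]

theorem sFun_eq {η : ℝ} (hη : η ≤ 1) :
    sFun η = (√((1 - η) / 2))⁻¹ * (√((1 + η) / 2))⁻¹ := by
  rw [sFun, ← mul_inv, ← Real.sqrt_mul (by linarith),
    show (1 - η) / 2 * ((1 + η) / 2) = (1 - η ^ 2) / 2 ^ 2 by ring,
    Real.sqrt_div' _ (by positivity), Real.sqrt_sq zero_le_two, inv_div]

theorem tFun_eq {η : ℝ} (h₁ : -1 ≤ η) (h₂ : η ≤ 1) :
    tFun η = 2 * ((√((1 + η) / 2))⁻¹ * ((√((1 - η) / 2))⁻¹ - (√((1 + η) / 2))⁻¹)) := by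
  have hsq : (√((1 + η) / 2))⁻¹ * (√((1 + η) / 2))⁻¹ = 2 / (1 + η) := by
    rw [← mul_inv, Real.mul_self_sqrt (by linarith), inv_div]
  rw [mul_sub, mul_comm _ (√((1 - η) / 2))⁻¹, ← sFun_eq h₂, hsq, tFun, sFun]
  ring

theorem rescaling_marginal_general (d : ℕ)
    (ν : Matrix (Fin 2 × Fin d) (Fin 2 × Fin d) ℂ)
    (hν : ν.PosSemidef)
    (η : ℝ) (hη : η ∈ Set.Ico (0 : ℝ) 1)
    (hA : (ptraceB ν).PosSemidef)
    (hspec : spectrum ℂ (ptraceB ν) = {(((1 - η) / 2 : ℝ) : ℂ), (((1 + η) / 2 : ℝ) : ℂ)}) :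
    ((hA.sqrt⁻¹ ⊗ₖ (1 : Matrix (Fin d) (Fin d) ℂ)) * ν *
        (hA.sqrt⁻¹ ⊗ₖ (1 : Matrix (Fin d) (Fin d) ℂ))
      - ((sFun η : ℂ) • ν
          - (tFun η : ℂ) • (((1 / 2 : ℂ) • (1 : Matrix (Fin 2) (Fin 2) ℂ)) ⊗ₖ ptraceA ν))).PosSemidef := by
  obtain ⟨hη₀, hη₁⟩ := hη
  obtain ⟨q, hq, hne⟩ :=
    Fin.exists_eq_and_forall_ne_eq_of_range_eq_pair (hA.1.range_eigenvalues_eq_pair hspec)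
  have hpos : ∀ i, 0 < hA.1.eigenvalues i := fun i => by
    by_cases hi : i = q
    · rw [hi, hq]; linarith
    · rw [hne i hi]; linarith
  set u := (√((1 - η) / 2))⁻¹
  set v := (√((1 + η) / 2))⁻¹
  have hvu : v ≤ u := inv_anti₀ (by positivity) (Real.sqrt_le_sqrt (by linarith))
  have hsqrt : hA.sqrt⁻¹ = (hA.1.eigenvectorUnitary : Matrix (Fin 2) (Fin 2) ℂ)
      * ((u : ℂ) • 1 - ((u : ℂ) - v) • single q q 1)
      * star (hA.1.eigenvectorUnitary : Matrix (Fin 2) (Fin 2) ℂ) := by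
    rw [hA.inv_sqrt_eq hpos, diagonal_eq_smul_one_sub_smul_single q (c := (u : ℂ))
      fun i hi => by rw [hne i hi]; rfl, hq]
    rfl
  have hs : sFun η = u * v := sFun_eq hη₁.le
  have ht : tFun η = 2 * (v * (u - v)) := tFun_eq (by linarith) hη₁.le
  rw [hsqrt, smul_kronecker, smul_smul, hs, ht, Complex.ofReal_mul,
    show ((2 * (v * (u - v)) : ℝ) : ℂ) * (1 / 2) = v * (u - v) by push_cast; ring]
  exact posSemidef_rescalingGap_conj_of_mem_unitaryGroup hA.1.eigenvectorUnitary.2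
    (fun ν hν => hν.rescalingGap_smul_one_sub_smul_single q (by positivity) hvu) hν

theorem rescaling_marginal (d : ℕ)
    (ν : Matrix (Fin 2 × Fin d) (Fin 2 × Fin d) ℂ)
    (hν : ν.PosSemidef) (htr : ν.trace = 1)
    (η : ℝ) (hη : η ∈ Set.Ico (0 : ℝ) 1)
    (hA : (ptraceB ν).PosSemidef)
    (hspec : spectrum ℂ (ptraceB ν) = {(((1 - η) / 2 : ℝ) : ℂ), (((1 + η) / 2 : ℝ) : ℂ)}) :
    ((hA.sqrt⁻¹ ⊗ₖ (1 : Matrix (Fin d) (Fin d) ℂ)) * ν *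
        (hA.sqrt⁻¹ ⊗ₖ (1 : Matrix (Fin d) (Fin d) ℂ))
      - ((sFun η : ℂ) • ν
          - (tFun η : ℂ) • (((1 / 2 : ℂ) • (1 : Matrix (Fin 2) (Fin 2) ℂ)) ⊗ₖ ptraceA ν))).PosSemidef :=
  rescaling_marginal_general d ν hν η hη hA hspec
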